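/- arXiv:2106.02101 — 2 statements merged into one kernel-verified Lean document; each statement's English description precedes it below -/
import Mathlib

section
/- Suppose K ∈ [−1+ε, −ε] for some ε > 0, φ is a smooth function satisfying 0 ≤ φ'(x)·e^{2(x−φ(x))} ≤ 1, φ' ∈ [0,1], φ'' ≤ 0, and φ(x) ≥ x − c for a constant c ≥ 0, with φ bounded below by some n. Then the quantity K_n := φ'(u)·e^{2(u−φ(u))}·K + e^{−2φ(u)}·(1 − φ'(u)) − e^{2(u−φ(u))}·φ''(u)·g, where g ≥ 0 and g is bounded above by C², satisfies K_n ≥ −1+ε and K_n ≤ 1 + 2·e^{2c}·C² (an explicit upper bound depending only on ε, c, C). -/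
/-- Pointwise curvature bound for the approximating metrics (Lemma 3.6):
with a = φ'(u), b = φ''(u), p = φ(u), g = ‖du‖²_h ∈ [0, C²], K ∈ [−1+ε, −ε],
0 ≤ a·e^{2(u−p)} ≤ 1, a ∈ [0,1], b ∈ [−2,0], u − c ≤ p, e^{−2p} ≤ 1, the quantity
K_n = a·e^{2(u−p)}·K + e^{−2p}(1−a) − e^{2(u−p)}·b·g
satisfies −1+ε ≤ K_n ≤ 1 + 2e^{2c}C². -/
theorem stmt7 (ε c C u p a b K g : ℝ) (hε : 0 < ε) (hc : 0 ≤ c)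
    (hK : K ∈ Set.Icc (-1 + ε) (-ε))
    (ha : a ∈ Set.Icc (0:ℝ) 1) (hb : b ∈ Set.Icc (-2 : ℝ) 0)
    (hcoef : a * Real.exp (2 * (u - p)) ≤ 1)
    (hpc : u - c ≤ p) (hpn : Real.exp (-2 * p) ≤ 1)
    (hg : g ∈ Set.Icc 0 (C ^ 2)) :
    -1 + ε ≤ a * Real.exp (2 * (u - p)) * K + Real.exp (-2 * p) * (1 - a)
        - Real.exp (2 * (u - p)) * b * g ∧
    a * Real.exp (2 * (u - p)) * K + Real.exp (-2 * p) * (1 - a)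
        - Real.exp (2 * (u - p)) * b * g ≤ 1 + 2 * Real.exp (2 * c) * C ^ 2 := by
  obtain ⟨hK1, hK2⟩ := hK
  obtain ⟨ha0, ha1⟩ := ha
  obtain ⟨hb2, hb0⟩ := hb
  obtain ⟨hg0, hgC⟩ := hg
  have hE : (0:ℝ) < Real.exp (2 * (u - p)) := Real.exp_pos _
  have hE2 : (0:ℝ) < Real.exp (-2 * p) := Real.exp_pos _
  have haE0 : 0 ≤ a * Real.exp (2 * (u - p)) := mul_nonneg ha0 hE.le
  have hKneg : K ≤ 0 := hK2.trans (by linarith)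
  have hK1neg : -1 + ε ≤ 0 := le_trans hK1 hKneg
  constructor
  · have h1 : -1 + ε ≤ a * Real.exp (2 * (u - p)) * K := by
      have := mul_le_mul_of_nonpos_right hcoef hK1neg
      nlinarith [mul_le_mul_of_nonneg_left hK1 haE0]
    have h2 : 0 ≤ Real.exp (-2 * p) * (1 - a) := mul_nonneg hE2.le (by linarith)
    have h3 : 0 ≤ -(Real.exp (2 * (u - p)) * b * g) := by
      have : Real.exp (2 * (u - p)) * b ≤ 0 := mul_nonpos_of_nonneg_of_nonpos hE.le hb0
      nlinarith
    linarith
  · have h1 : a * Real.exp (2 * (u - p)) * K ≤ 0 := mul_nonpos_of_nonneg_of_nonpos haE0 hKneg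
    have h2 : Real.exp (-2 * p) * (1 - a) ≤ 1 := by
      calc Real.exp (-2 * p) * (1 - a) ≤ 1 * 1 :=
        mul_le_mul hpn (by linarith) (by linarith) one_pos.le
      _ = 1 := one_mul 1
    have hEc : Real.exp (2 * (u - p)) ≤ Real.exp (2 * c) :=
      Real.exp_le_exp.mpr (by linarith)
    have h3 : -(Real.exp (2 * (u - p)) * b * g) ≤ 2 * Real.exp (2 * c) * C ^ 2 := by
      have hbg : -(b * g) ≤ 2 * C ^ 2 := by nlinarith
      nlinarith [mul_nonneg hg0 (neg_nonneg.mpr hb0)]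
    linarith
end

section
/- Let v be a smooth function on a Riemannian surface (S, h) satisfying Δ_h v = K + e^{−2v}, where K is the curvature of h, and suppose |K| ≤ M and |v| ≤ M on a geodesic ball B(x, r). If h has bounded geometry on B(x, r) (curvature bounds and injectivity radius ≥ r), then ‖dv(x)‖_h ≤ C for a constant C depending only on M, r, and the geometry bounds. -/
/-- The positive Laplacian −(f_xx + f_yy) on ℂ ≅ ℝ², so that the conformal metric
e^{2w}|dz|² has curvature e^{−2w}·lapC w and Laplacian Δ_h f = e^{−2w}·lapC f. -/
noncomputable def lapC (f : ℂ → ℝ) (z : ℂ) : ℝ :=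
  -((fderiv ℝ (fun w => fderiv ℝ f w 1) z 1) +
    (fderiv ℝ (fun w => fderiv ℝ f w Complex.I) z Complex.I))

open MeasureTheory Metric Set intervalIntegral Function Real Interval

noncomputable def zpt (x : ℂ) (t θ : ℝ) : ℂ := x + (t : ℂ) * Complex.exp (θ * Complex.I)

noncomputable def d1 (f : ℂ → ℝ) (c : ℂ) : ℝ := fderiv ℝ f c 1
noncomputable def d2 (f : ℂ → ℝ) (c : ℂ) : ℝ := fderiv ℝ f c Complex.I

lemma lapC_eq (f : ℂ → ℝ) (z : ℂ) : lapC f z = -(d1 (d1 f) z + d2 (d2 f) z) := rfl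

lemma clm_decomp (L : ℂ →L[ℝ] ℝ) (d : ℂ) : L d = d.re * L 1 + d.im * L Complex.I := by
  have hd : d = d.re • (1:ℂ) + d.im • Complex.I := by
    simp [Complex.real_smul, Complex.re_add_im]
  conv_lhs => rw [hd]
  rw [map_add, L.map_smul, L.map_smul, smul_eq_mul, smul_eq_mul]

lemma zpt_mem {x : ℂ} {r σ : ℝ} {t θ : ℝ} (h0 : 0 ≤ t) (h1 : t ≤ σ) (h2 : σ < r) :
    zpt x t θ ∈ ball x r := by
  simp only [zpt, mem_ball, dist_eq_norm]
  rw [add_sub_cancel_left, norm_mul]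
  simp only [Complex.norm_exp_ofReal_mul_I, Complex.norm_real, Real.norm_eq_abs]
  rw [mul_one, abs_of_nonneg h0]
  linarith

lemma zpt_zero (x : ℂ) (θ : ℝ) : zpt x 0 θ = x := by simp [zpt]

lemma zpt_per (x : ℂ) (t : ℝ) : zpt x t (2*Real.pi) = zpt x t 0 := by
  have h : ((2*Real.pi : ℝ) : ℂ) * Complex.I = 2 * (Real.pi:ℂ) * Complex.I := by push_cast; ring
  simp [zpt, h, Complex.exp_two_pi_mul_I]

lemma hasDerivAt_circ {f : ℂ → ℝ} {L : ℂ →L[ℝ] ℝ} {x : ℂ} {t θ : ℝ}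
    (hf : HasFDerivAt f L (zpt x t θ)) :
    HasDerivAt (fun θ' => f (zpt x t θ'))
      (t * (-Real.sin θ * L 1 + Real.cos θ * L Complex.I)) θ := by
  have hp : HasDerivAt (fun θ' : ℝ => zpt x t θ') ((t:ℂ) * (Complex.I * Complex.exp (θ * Complex.I))) θ := by
    have h1 : HasDerivAt (fun θ' : ℝ => (θ' : ℂ)) 1 θ := Complex.ofRealCLM.hasDerivAt
    have h2 : HasDerivAt (fun θ' : ℝ => (θ' : ℂ) * Complex.I) Complex.I θ := by
      simpa using h1.mul_const Complex.I
    have h4 := (h2.cexp.const_mul (t:ℂ)).const_add x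
    simpa [zpt, mul_comm] using h4
  have := hf.comp_hasDerivAt θ hp
  refine this.congr_deriv ?_
  conv_lhs => rw [clm_decomp L]
  have hre : ((t:ℂ) * (Complex.I * Complex.exp (θ * Complex.I))).re = t * (-Real.sin θ) := by
    simp [Complex.exp_ofReal_mul_I_re, Complex.exp_ofReal_mul_I_im, Complex.mul_re, Complex.mul_im]
  have him : ((t:ℂ) * (Complex.I * Complex.exp (θ * Complex.I))).im = t * Real.cos θ := by
    simp [Complex.exp_ofReal_mul_I_re, Complex.exp_ofReal_mul_I_im, Complex.mul_re, Complex.mul_im]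
  rw [hre, him]; ring

lemma hasDerivAt_rad {f : ℂ → ℝ} {L : ℂ →L[ℝ] ℝ} {x : ℂ} {t θ : ℝ}
    (hf : HasFDerivAt f L (zpt x t θ)) :
    HasDerivAt (fun t' => f (zpt x t' θ))
      (Real.cos θ * L 1 + Real.sin θ * L Complex.I) t := by
  have hp : HasDerivAt (fun t' : ℝ => zpt x t' θ) (Complex.exp (θ * Complex.I)) t := by
    have h1 : HasDerivAt (fun t' : ℝ => (t' : ℂ)) 1 t := Complex.ofRealCLM.hasDerivAt
    have h2 := (h1.mul_const (Complex.exp (θ * Complex.I))).const_add x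
    simpa [zpt] using h2
  have := hf.comp_hasDerivAt t hp
  refine this.congr_deriv ?_
  conv_lhs => rw [clm_decomp L]
  simp [Complex.exp_ofReal_mul_I_re, Complex.exp_ofReal_mul_I_im]

lemma prod_integrable {f : ℝ → ℝ → ℝ} {a b : ℝ}
    (hf : ContinuousOn (uncurry f) (Icc 0 a ×ˢ Icc 0 b)) :
    Integrable (uncurry f) ((volume.restrict (Ioc 0 a)).prod (volume.restrict (Ioc 0 b))) := by
  rw [Measure.prod_restrict]
  exact (hf.integrableOn_compact (isCompact_Icc.prod isCompact_Icc)).mono_set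
    (Set.prod_mono Ioc_subset_Icc_self Ioc_subset_Icc_self)

lemma swap_helper {f : ℝ → ℝ → ℝ} {a b : ℝ} (ha : 0 ≤ a) (hb : 0 ≤ b)
    (hf : ContinuousOn (uncurry f) (Icc 0 a ×ˢ Icc 0 b)) :
    ∫ t in (0:ℝ)..a, ∫ θ in (0:ℝ)..b, f t θ = ∫ θ in (0:ℝ)..b, ∫ t in (0:ℝ)..a, f t θ := by
  have h := MeasureTheory.integral_integral_swap (prod_integrable hf)
  simp only [integral_of_le ha, integral_of_le hb]
  exact h

lemma integrable_helper {f : ℝ → ℝ → ℝ} {a b : ℝ} (ha : 0 ≤ a) (hb : 0 ≤ b)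
    (hf : ContinuousOn (uncurry f) (Icc 0 a ×ˢ Icc 0 b)) :
    IntervalIntegrable (fun t => ∫ θ in (0:ℝ)..b, f t θ) volume 0 a := by
  rw [intervalIntegrable_iff_integrableOn_Ioc_of_le ha]
  have h := (prod_integrable hf).integral_prod_left
  have he : (fun t => ∫ θ in (0:ℝ)..b, f t θ) = fun t => ∫ θ in Ioc 0 b, f t θ := by
    funext t; rw [integral_of_le hb]
  rw [he]
  exact h

-- smoothness helpers
lemma hasfd {f : ℂ → ℝ} {x : ℂ} {r : ℝ} (hf : ContDiffOn ℝ (⊤:ℕ∞) f (ball x r))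
    {c : ℂ} (hc : c ∈ ball x r) : HasFDerivAt f (fderiv ℝ f c) c :=
  (((hf c hc).contDiffAt ((isOpen_ball).mem_nhds hc)).differentiableAt
    (by simp)).hasFDerivAt

lemma smo_dv {f : ℂ → ℝ} {x : ℂ} {r : ℝ} (v : ℂ) (hf : ContDiffOn ℝ (⊤:ℕ∞) f (ball x r)) :
    ContDiffOn ℝ (⊤:ℕ∞) (fun c => fderiv ℝ f c v) (ball x r) := by
  have h := ((contDiffOn_infty_iff_fderiv_of_isOpen isOpen_ball).1 hf).2
  exact h.clm_apply contDiffOn_const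

lemma smo_d1 {f : ℂ → ℝ} {x : ℂ} {r : ℝ} (hf : ContDiffOn ℝ (⊤:ℕ∞) f (ball x r)) :
    ContDiffOn ℝ (⊤:ℕ∞) (d1 f) (ball x r) := smo_dv 1 hf

lemma smo_d2 {f : ℂ → ℝ} {x : ℂ} {r : ℝ} (hf : ContDiffOn ℝ (⊤:ℕ∞) f (ball x r)) :
    ContDiffOn ℝ (⊤:ℕ∞) (d2 f) (ball x r) := smo_dv Complex.I hf

lemma symm_snd {u : ℂ → ℝ} {x : ℂ} {r : ℝ} (hu : ContDiffOn ℝ (⊤:ℕ∞) u (ball x r))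
    {c : ℂ} (hc : c ∈ ball x r) : d1 (d2 u) c = d2 (d1 u) c := by
  have hat := (hu c hc).contDiffAt ((isOpen_ball).mem_nhds hc)
  have hsymm : ∀ v w, fderiv ℝ (fderiv ℝ u) c v w = fderiv ℝ (fderiv ℝ u) c w v :=
    hat.isSymmSndFDerivAt (by rw [minSmoothness_of_isRCLikeNormedField]; exact WithTop.coe_le_coe.mpr (le_top : (2:ℕ∞) ≤ ⊤))
  have hdiff : DifferentiableAt ℝ (fderiv ℝ u) c := by
    have h := ((contDiffOn_infty_iff_fderiv_of_isOpen isOpen_ball).1 hu).2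
    exact ((h c hc).contDiffAt ((isOpen_ball).mem_nhds hc)).differentiableAt (by simp)
  show fderiv ℝ (fun y => fderiv ℝ u y Complex.I) c 1 = fderiv ℝ (fun y => fderiv ℝ u y 1) c Complex.I
  rw [fderiv_clm_apply hdiff (differentiableAt_const _),
      fderiv_clm_apply hdiff (differentiableAt_const _)]
  simp [hsymm Complex.I 1]

-- continuity helpers
lemma zpt_cont2 {x : ℂ} : Continuous fun p : ℝ × ℝ => zpt x p.1 p.2 := by
  unfold zpt; continuity

lemma zpt_cont_t {x : ℂ} {θ : ℝ} : Continuous fun t => zpt x t θ := by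
  unfold zpt; continuity

lemma zpt_cont_th {x : ℂ} {t : ℝ} : Continuous fun θ => zpt x t θ := by
  unfold zpt; continuity

lemma cont_slice {f : ℂ → ℝ} {x : ℂ} {r : ℝ} (hf : ContinuousOn f (ball x r))
    {t : ℝ} (h0 : 0 ≤ t) (h1 : t < r) : Continuous fun θ => f (zpt x t θ) :=
  hf.comp_continuous zpt_cont_th (fun θ => zpt_mem h0 le_rfl h1)

lemma cont_rect {f : ℂ → ℝ} {x : ℂ} {r σ b : ℝ} (hf : ContinuousOn f (ball x r))
    (hσr : σ < r) :
    ContinuousOn (fun p : ℝ × ℝ => f (zpt x p.1 p.2)) (Icc 0 σ ×ˢ Icc 0 b) :=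
  hf.comp zpt_cont2.continuousOn (fun p hp => zpt_mem hp.1.1 hp.1.2 hσr)

lemma cont_slice_t {f : ℂ → ℝ} {x : ℂ} {r σ : ℝ} (hf : ContinuousOn f (ball x r))
    (hσr : σ < r) (θ : ℝ) : ContinuousOn (fun t => f (zpt x t θ)) (Icc 0 σ) :=
  hf.comp zpt_cont_t.continuousOn (fun t ht => zpt_mem ht.1 ht.2 hσr)

noncomputable def kk (α β θ : ℝ) : ℝ := α * Real.cos θ + β * Real.sin θ
noncomputable def mm (α β θ : ℝ) : ℝ := α * Real.sin θ - β * Real.cos θ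

lemma ckk {α β : ℝ} : Continuous (kk α β) := by unfold kk; fun_prop
lemma cmm {α β : ℝ} : Continuous (mm α β) := by unfold mm; fun_prop

lemma hasDerivAt_mm {α β θ : ℝ} : HasDerivAt (mm α β) (kk α β θ) θ := by
  have h := ((Real.hasDerivAt_sin θ).const_mul α).sub ((Real.hasDerivAt_cos θ).const_mul β)
  have : HasDerivAt (mm α β) (α * Real.cos θ - β * -Real.sin θ) θ := h
  convert this using 1
  unfold kk; ring

lemma stepA (u : ℂ → ℝ) (x : ℂ) (r σ α β : ℝ) (hσ : 0 < σ) (hσr : σ < r)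
    (hu : ContDiffOn ℝ (⊤:ℕ∞) u (Metric.ball x r)) (hαβ : α^2+β^2=1) :
    (∫ t in (0:ℝ)..σ, ∫ θ in (0:ℝ)..(2*π), t * (α * d1 u (zpt x t θ) + β * d2 u (zpt x t θ))) =
    σ * ∫ θ in (0:ℝ)..(2*π), kk α β θ * u (zpt x σ θ) := by
  have htp0 : (0:ℝ) ≤ 2*π := by positivity
  have hcu : ContinuousOn u (ball x r) := hu.continuousOn
  have h1 := smo_d1 hu
  have h2 := smo_d2 hu
  have hc1 : ContinuousOn (d1 u) (ball x r) := h1.continuousOn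
  have hc2 : ContinuousOn (d2 u) (ball x r) := h2.continuousOn
  have base0 := cont_rect (b := 2*π) hcu hσr
  have base1 := cont_rect (b := 2*π) hc1 hσr
  have base2 := cont_rect (b := 2*π) hc2 hσr
  set G : ℝ → ℝ → ℝ := fun t θ =>
    t * kk α β θ * (Real.cos θ * d1 u (zpt x t θ) + Real.sin θ * d2 u (zpt x t θ)) with hG
  set F0 : ℝ → ℝ → ℝ := fun t θ => kk α β θ * u (zpt x t θ) with hF0
  set H : ℝ → ℝ → ℝ := fun t θ =>
    t * mm α β θ * (Real.sin θ * d1 u (zpt x t θ) - Real.cos θ * d2 u (zpt x t θ)) with hH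
  -- rectangle continuity
  have cG : ContinuousOn (Function.uncurry G) (Icc 0 σ ×ˢ Icc 0 (2*π)) := by
    exact ((continuous_fst.mul (ckk.comp continuous_snd)).continuousOn).mul
      (((Real.continuous_cos.comp continuous_snd).continuousOn.mul base1).add
       ((Real.continuous_sin.comp continuous_snd).continuousOn.mul base2))
  have cF0 : ContinuousOn (Function.uncurry F0) (Icc 0 σ ×ˢ Icc 0 (2*π)) := by
    exact ((ckk.comp continuous_snd).continuousOn).mul base0
  have cH : ContinuousOn (Function.uncurry H) (Icc 0 σ ×ˢ Icc 0 (2*π)) := by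
    exact ((continuous_fst.mul (cmm.comp continuous_snd)).continuousOn).mul
      (((Real.continuous_sin.comp continuous_snd).continuousOn.mul base1).sub
       ((Real.continuous_cos.comp continuous_snd).continuousOn.mul base2))
  -- θ-slice integrability for t ∈ Icc 0 σ
  have slI : ∀ t ∈ Icc (0:ℝ) σ, ∀ f : ℝ → ℝ, Continuous f →
      IntervalIntegrable f volume 0 (2*π) := fun _ _ f hf => hf.intervalIntegrable _ _
  -- I2 : per-t integration by parts identity
  have I2 : ∀ t ∈ Icc (0:ℝ) σ,
      (∫ θ in (0:ℝ)..(2*π), H t θ) = ∫ θ in (0:ℝ)..(2*π), F0 t θ := by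
    intro t ht
    have htr : t < r := lt_of_le_of_lt ht.2 hσr
    have sl0 : Continuous fun θ => u (zpt x t θ) := cont_slice hcu ht.1 htr
    have sl1 : Continuous fun θ => d1 u (zpt x t θ) := cont_slice hc1 ht.1 htr
    have sl2 : Continuous fun θ => d2 u (zpt x t θ) := cont_slice hc2 ht.1 htr
    have hder : ∀ θ ∈ uIcc (0:ℝ) (2*π),
        HasDerivAt (fun θ => mm α β θ * u (zpt x t θ))
          (kk α β θ * u (zpt x t θ) +
            mm α β θ * (t * (-Real.sin θ * d1 u (zpt x t θ) + Real.cos θ * d2 u (zpt x t θ)))) θ := by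
      intro θ _
      exact hasDerivAt_mm.mul (hasDerivAt_circ (hasfd hu (zpt_mem ht.1 ht.2 hσr)))
    have hintd : IntervalIntegrable (fun θ => kk α β θ * u (zpt x t θ) +
        mm α β θ * (t * (-Real.sin θ * d1 u (zpt x t θ) + Real.cos θ * d2 u (zpt x t θ))))
        volume 0 (2*π) := by
      apply Continuous.intervalIntegrable
      exact (ckk.mul sl0).add (cmm.mul ((continuous_const.mul
        ((Real.continuous_sin.neg.mul sl1).add
          (Real.continuous_cos.mul sl2)))))
    have h0 := intervalIntegral.integral_eq_sub_of_hasDerivAt hder hintd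
    have hper : mm α β (2*π) * u (zpt x t (2*π)) = mm α β 0 * u (zpt x t 0) := by
      rw [zpt_per]; unfold mm; simp
    rw [hper, sub_self] at h0
    have hi1 : IntervalIntegrable (fun θ => F0 t θ) volume 0 (2*π) :=
      Continuous.intervalIntegrable (ckk.mul sl0) _ _
    have hi2 : IntervalIntegrable (fun θ =>
        mm α β θ * (t * (-Real.sin θ * d1 u (zpt x t θ) + Real.cos θ * d2 u (zpt x t θ))))
        volume 0 (2*π) := by
      apply Continuous.intervalIntegrable
      exact cmm.mul (continuous_const.mul
        ((Real.continuous_sin.neg.mul sl1).add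
          (Real.continuous_cos.mul sl2)))
    rw [intervalIntegral.integral_add hi1 hi2] at h0
    have hneg : (∫ θ in (0:ℝ)..(2*π),
        mm α β θ * (t * (-Real.sin θ * d1 u (zpt x t θ) + Real.cos θ * d2 u (zpt x t θ))))
        = - ∫ θ in (0:ℝ)..(2*π), H t θ := by
      rw [← intervalIntegral.integral_neg]
      apply intervalIntegral.integral_congr
      intro θ _
      simp only [hH]
      ring
    rw [hneg] at h0
    linarith
  -- pointwise split F1 = G + H
  have key1 : ∀ t ∈ Icc (0:ℝ) σ,
      (∫ θ in (0:ℝ)..(2*π), t * (α * d1 u (zpt x t θ) + β * d2 u (zpt x t θ)))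
        = (∫ θ in (0:ℝ)..(2*π), G t θ) + ∫ θ in (0:ℝ)..(2*π), F0 t θ := by
    intro t ht
    have htr : t < r := lt_of_le_of_lt ht.2 hσr
    have sl1 : Continuous fun θ => d1 u (zpt x t θ) := cont_slice hc1 ht.1 htr
    have sl2 : Continuous fun θ => d2 u (zpt x t θ) := cont_slice hc2 ht.1 htr
    have iG : IntervalIntegrable (fun θ => G t θ) volume 0 (2*π) := by
      apply Continuous.intervalIntegrable
      exact (continuous_const.mul ckk).mul
        ((Real.continuous_cos.mul sl1).add (Real.continuous_sin.mul sl2))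
    have iH : IntervalIntegrable (fun θ => H t θ) volume 0 (2*π) := by
      apply Continuous.intervalIntegrable
      exact (continuous_const.mul cmm).mul
        ((Real.continuous_sin.mul sl1).sub (Real.continuous_cos.mul sl2))
    rw [← I2 t ht, ← intervalIntegral.integral_add iG iH]
    apply intervalIntegral.integral_congr
    intro θ _
    have hsc := Real.sin_sq_add_cos_sq θ
    simp only [hG, hH, kk, mm]
    linear_combination (-(t * α * d1 u (zpt x t θ)) - t * β * d2 u (zpt x t θ)) * hsc
  -- I4 : per-θ FTC in t
  have I4 : ∀ θ, (∫ t in (0:ℝ)..σ, (F0 t θ + G t θ)) = σ * F0 σ θ := by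
    intro θ
    have hder : ∀ t ∈ uIcc (0:ℝ) σ, HasDerivAt (fun t => t * F0 t θ) (F0 t θ + G t θ) t := by
      intro t htm
      rw [uIcc_of_le hσ.le] at htm
      have hfd := hasfd hu (zpt_mem (θ := θ) htm.1 htm.2 hσr)
      have hval := hasDerivAt_rad hfd
      have hprod := (hasDerivAt_id t).mul (hval.const_mul (kk α β θ))
      refine hprod.congr_deriv ?_
      simp only [hF0, hG, d1, d2, id_eq]
      ring
    have hintd : IntervalIntegrable (fun t => F0 t θ + G t θ) volume 0 σ := by
      apply ContinuousOn.intervalIntegrable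
      rw [uIcc_of_le hσ.le]
      exact (continuousOn_const.mul (cont_slice_t hcu hσr θ)).add
        (((continuousOn_id.mul continuousOn_const)).mul
          ((continuousOn_const.mul (cont_slice_t hc1 hσr θ)).add
           (continuousOn_const.mul (cont_slice_t hc2 hσr θ))))
    have h0 := intervalIntegral.integral_eq_sub_of_hasDerivAt hder hintd
    simpa using h0
  -- integrability of slices in t for F0, G  (for splitting ∫(F0+G))
  have iF0t : ∀ θ, IntervalIntegrable (fun t => F0 t θ) volume 0 σ := by
    intro θ
    apply ContinuousOn.intervalIntegrable
    rw [uIcc_of_le hσ.le]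
    exact continuousOn_const.mul (cont_slice_t hcu hσr θ)
  have iGt : ∀ θ, IntervalIntegrable (fun t => G t θ) volume 0 σ := by
    intro θ
    apply ContinuousOn.intervalIntegrable
    rw [uIcc_of_le hσ.le]
    exact ((continuousOn_id.mul continuousOn_const)).mul
        ((continuousOn_const.mul (cont_slice_t hc1 hσr θ)).add
         (continuousOn_const.mul (cont_slice_t hc2 hσr θ)))
  -- key3 : the Fubini step
  have key3 : (∫ t in (0:ℝ)..σ, ∫ θ in (0:ℝ)..(2*π), G t θ)
      = σ * (∫ θ in (0:ℝ)..(2*π), F0 σ θ) - ∫ t in (0:ℝ)..σ, ∫ θ in (0:ℝ)..(2*π), F0 t θ := by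
    rw [swap_helper hσ.le htp0 cG]
    have perθ : EqOn (fun θ => ∫ t in (0:ℝ)..σ, G t θ)
        (fun θ => σ * F0 σ θ - ∫ t in (0:ℝ)..σ, F0 t θ) (uIcc 0 (2*π)) := by
      intro θ _
      have h4 := I4 θ
      rw [intervalIntegral.integral_add (iF0t θ) (iGt θ)] at h4
      simp only
      linarith
    rw [intervalIntegral.integral_congr perθ]
    have ia : IntervalIntegrable (fun θ => σ * F0 σ θ) volume 0 (2*π) := by
      apply Continuous.intervalIntegrable
      exact continuous_const.mul (ckk.mul (cont_slice hcu hσ.le hσr))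
    have ib : IntervalIntegrable (fun θ => ∫ t in (0:ℝ)..σ, F0 t θ) volume 0 (2*π) := by
      rw [intervalIntegrable_iff_integrableOn_Ioc_of_le htp0]
      have h := (prod_integrable cF0).integral_prod_right
      have he : (fun θ => ∫ t in (0:ℝ)..σ, F0 t θ) = fun θ => ∫ t in Ioc 0 σ, F0 t θ := by
        funext θ; rw [intervalIntegral.integral_of_le hσ.le]
      rw [he]
      exact h
    rw [intervalIntegral.integral_sub ia ib]
    rw [intervalIntegral.integral_const_mul]
    rw [swap_helper hσ.le htp0 cF0]
  -- assemble
  have key2 : (∫ t in (0:ℝ)..σ, ∫ θ in (0:ℝ)..(2*π), t * (α * d1 u (zpt x t θ) + β * d2 u (zpt x t θ)))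
      = (∫ t in (0:ℝ)..σ, ∫ θ in (0:ℝ)..(2*π), G t θ)
        + ∫ t in (0:ℝ)..σ, ∫ θ in (0:ℝ)..(2*π), F0 t θ := by
    have hcong : EqOn (fun t => ∫ θ in (0:ℝ)..(2*π), t * (α * d1 u (zpt x t θ) + β * d2 u (zpt x t θ)))
        (fun t => (∫ θ in (0:ℝ)..(2*π), G t θ) + ∫ θ in (0:ℝ)..(2*π), F0 t θ) (uIcc 0 σ) := by
      intro t htm
      rw [uIcc_of_le hσ.le] at htm
      exact key1 t htm
    rw [intervalIntegral.integral_congr hcong]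
    exact intervalIntegral.integral_add (integrable_helper hσ.le htp0 cG) (integrable_helper hσ.le htp0 cF0)
  rw [key2, key3]
  ring

lemma stepB (u : ℂ → ℝ) (x : ℂ) (r σ α β B : ℝ) (hσ : 0 < σ) (hσr : σ < r)
    (hu : ContDiffOn ℝ (⊤:ℕ∞) u (Metric.ball x r)) (hαβ : α^2+β^2=1)
    (hB : ∀ z ∈ Metric.ball x r, |lapC u z| ≤ B)
    {t : ℝ} (ht : t ∈ Icc (0:ℝ) σ) :
    |(∫ θ in (0:ℝ)..(2*π), (α * d1 u (zpt x t θ) + β * d2 u (zpt x t θ)))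
       - (2*π) * (α * d1 u x + β * d2 u x)| ≤ 4*π*B*t := by
  have htp0 : (0:ℝ) ≤ 2*π := by positivity
  have htr : t < r := lt_of_le_of_lt ht.2 hσr
  have h1 := smo_d1 hu
  have h2 := smo_d2 hu
  have h11 := smo_d1 h1
  have h21 := smo_d1 h2
  have h12 := smo_d2 h1
  have h22 := smo_d2 h2
  have hc1 : ContinuousOn (d1 u) (ball x r) := h1.continuousOn
  have hc2 : ContinuousOn (d2 u) (ball x r) := h2.continuousOn
  have hc11 : ContinuousOn (d1 (d1 u)) (ball x r) := h11.continuousOn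
  have hc21 : ContinuousOn (d1 (d2 u)) (ball x r) := h21.continuousOn
  have hc12 : ContinuousOn (d2 (d1 u)) (ball x r) := h12.continuousOn
  have hc22 : ContinuousOn (d2 (d2 u)) (ball x r) := h22.continuousOn
  have hα1 : |α| ≤ 1 := by nlinarith [sq_abs α, abs_nonneg α, sq_nonneg β]
  have hβ1 : |β| ≤ 1 := by nlinarith [sq_abs β, abs_nonneg β, sq_nonneg α]
  have hkk : ∀ θ, |kk α β θ| ≤ 2 := by
    intro θ
    unfold kk
    calc |α * Real.cos θ + β * Real.sin θ| ≤ |α * Real.cos θ| + |β * Real.sin θ| := abs_add_le _ _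
    _ ≤ |α| * 1 + |β| * 1 := by
        rw [abs_mul, abs_mul]
        gcongr
        · exact Real.abs_cos_le_one θ
        · exact Real.abs_sin_le_one θ
    _ ≤ 2 := by linarith
  set D : ℝ → ℝ → ℝ := fun s θ =>
    Real.cos θ * (α * d1 (d1 u) (zpt x s θ) + β * d1 (d2 u) (zpt x s θ)) +
    Real.sin θ * (α * d2 (d1 u) (zpt x s θ) + β * d2 (d2 u) (zpt x s θ)) with hD
  set KL : ℝ → ℝ → ℝ := fun s θ =>
    kk α β θ * (d1 (d1 u) (zpt x s θ) + d2 (d2 u) (zpt x s θ)) with hKL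
  -- b1 : FTC in s at fixed θ
  have b1 : ∀ θ, (∫ s in (0:ℝ)..t, D s θ)
      = (α * d1 u (zpt x t θ) + β * d2 u (zpt x t θ)) - (α * d1 u x + β * d2 u x) := by
    intro θ
    have hder : ∀ s ∈ uIcc (0:ℝ) t,
        HasDerivAt (fun s => α * d1 u (zpt x s θ) + β * d2 u (zpt x s θ)) (D s θ) s := by
      intro s hsm
      rw [uIcc_of_le ht.1] at hsm
      have hmem := zpt_mem (x := x) (θ := θ) hsm.1 (hsm.2.trans ht.2) hσr
      have hcombo := ((hasDerivAt_rad (hasfd h1 hmem)).const_mul α).add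
        ((hasDerivAt_rad (hasfd h2 hmem)).const_mul β)
      refine hcombo.congr_deriv ?_
      simp only [hD, d1, d2]
      ring
    have hint : IntervalIntegrable (fun s => D s θ) volume 0 t := by
      apply ContinuousOn.intervalIntegrable
      rw [uIcc_of_le ht.1]
      have m11 := (cont_slice_t hc11 hσr θ).mono (Icc_subset_Icc_right ht.2)
      have m21 := (cont_slice_t hc21 hσr θ).mono (Icc_subset_Icc_right ht.2)
      have m12 := (cont_slice_t hc12 hσr θ).mono (Icc_subset_Icc_right ht.2)
      have m22 := (cont_slice_t hc22 hσr θ).mono (Icc_subset_Icc_right ht.2)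
      exact (continuousOn_const.mul ((continuousOn_const.mul m11).add
          (continuousOn_const.mul m21))).add
        (continuousOn_const.mul ((continuousOn_const.mul m12).add
          (continuousOn_const.mul m22)))
    have h0 := intervalIntegral.integral_eq_sub_of_hasDerivAt hder hint
    rw [h0, zpt_zero]
  -- b3 : circle integral of D equals circle integral of KL
  have b3 : ∀ s ∈ Icc (0:ℝ) t, (∫ θ in (0:ℝ)..(2*π), D s θ) = ∫ θ in (0:ℝ)..(2*π), KL s θ := by
    intro s hs
    have hsr : s < r := lt_of_le_of_lt (hs.2.trans ht.2) hσr
    have sl11 : Continuous fun θ => d1 (d1 u) (zpt x s θ) := cont_slice hc11 hs.1 hsr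
    have sl21 : Continuous fun θ => d1 (d2 u) (zpt x s θ) := cont_slice hc21 hs.1 hsr
    have sl12 : Continuous fun θ => d2 (d1 u) (zpt x s θ) := cont_slice hc12 hs.1 hsr
    have sl22 : Continuous fun θ => d2 (d2 u) (zpt x s θ) := cont_slice hc22 hs.1 hsr
    have iD : IntervalIntegrable (fun θ => D s θ) volume 0 (2*π) := by
      apply Continuous.intervalIntegrable
      exact (Real.continuous_cos.mul ((continuous_const.mul sl11).add
          (continuous_const.mul sl21))).add
        (Real.continuous_sin.mul ((continuous_const.mul sl12).add
          (continuous_const.mul sl22)))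
    have iKL : IntervalIntegrable (fun θ => KL s θ) volume 0 (2*π) := by
      apply Continuous.intervalIntegrable
      exact ckk.mul (sl11.add sl22)
    have e1 : ∀ c1 c2 : ℝ, (∫ θ in (0:ℝ)..(2*π), (Real.cos θ * c1 + Real.sin θ * c2)) = 0 := by
      intro c1 c2
      rw [intervalIntegral.integral_add (f := fun θ => Real.cos θ * c1) (g := fun θ => Real.sin θ * c2)
          ((Real.continuous_cos.mul continuous_const).intervalIntegrable _ _)
          ((Real.continuous_sin.mul continuous_const).intervalIntegrable _ _),
        intervalIntegral.integral_mul_const, intervalIntegral.integral_mul_const,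
        integral_cos, integral_sin]
      simp [Real.sin_two_pi, Real.cos_two_pi]
    rcases eq_or_lt_of_le hs.1 with hs0 | hs0
    · -- s = 0
      have hs0' : s = 0 := hs0.symm
      subst hs0'
      have hLe : (fun θ => D 0 θ) = fun θ =>
          Real.cos θ * (α * d1 (d1 u) x + β * d1 (d2 u) x) +
          Real.sin θ * (α * d2 (d1 u) x + β * d2 (d2 u) x) := by
        funext θ; simp [hD, zpt_zero]
      have hRe : (fun θ => KL 0 θ) = fun θ =>
          Real.cos θ * (α * (d1 (d1 u) x + d2 (d2 u) x)) +
          Real.sin θ * (β * (d1 (d1 u) x + d2 (d2 u) x)) := by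
        funext θ; simp only [hKL, zpt_zero, kk]; ring
      rw [hLe, hRe, e1, e1]
    · -- s > 0
      have hper : (-β * d1 u (zpt x s (2*π)) + α * d2 u (zpt x s (2*π)))
          = -β * d1 u (zpt x s 0) + α * d2 u (zpt x s 0) := by rw [zpt_per]
      have hder : ∀ θ ∈ uIcc (0:ℝ) (2*π),
          HasDerivAt (fun θ => -β * d1 u (zpt x s θ) + α * d2 u (zpt x s θ))
            (s * KL s θ - s * D s θ) θ := by
        intro θ _
        have hmem := zpt_mem (x := x) (θ := θ) hs.1 (hs.2.trans ht.2) hσr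
        have hcombo := ((hasDerivAt_circ (hasfd h1 hmem)).const_mul (-β)).add
          ((hasDerivAt_circ (hasfd h2 hmem)).const_mul α)
        refine hcombo.congr_deriv ?_
        have hsym := symm_snd hu hmem
        simp only [hKL, hD, d1, d2, kk] at hsym ⊢
        rw [← hsym]
        ring
      have hintd : IntervalIntegrable (fun θ => s * KL s θ - s * D s θ) volume 0 (2*π) :=
        ((iKL.const_mul s).sub (iD.const_mul s))
      have h0 := intervalIntegral.integral_eq_sub_of_hasDerivAt hder hintd
      rw [hper, sub_self] at h0
      rw [intervalIntegral.integral_sub (iKL.const_mul s) (iD.const_mul s),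
        intervalIntegral.integral_const_mul, intervalIntegral.integral_const_mul] at h0
      have := sub_eq_zero.1 h0
      exact (mul_left_cancel₀ (ne_of_gt hs0) this).symm
  -- b2 : swap and assemble
  have hr0 : (0:ℝ) < r := hσ.trans hσr
  have slu1 : Continuous fun θ => d1 u (zpt x t θ) := cont_slice hc1 ht.1 htr
  have slu2 : Continuous fun θ => d2 u (zpt x t θ) := cont_slice hc2 ht.1 htr
  have iue : IntervalIntegrable (fun θ => α * d1 u (zpt x t θ) + β * d2 u (zpt x t θ))
      volume 0 (2*π) :=
    Continuous.intervalIntegrable ((continuous_const.mul slu1).add (continuous_const.mul slu2)) _ _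
  have hsub : (∫ θ in (0:ℝ)..(2*π), (α * d1 u (zpt x t θ) + β * d2 u (zpt x t θ)))
      - (2*π) * (α * d1 u x + β * d2 u x)
      = ∫ θ in (0:ℝ)..(2*π),
          ((α * d1 u (zpt x t θ) + β * d2 u (zpt x t θ)) - (α * d1 u x + β * d2 u x)) := by
    rw [intervalIntegral.integral_sub iue (intervalIntegrable_const)]
    rw [intervalIntegral.integral_const]
    simp [smul_eq_mul]
  have hcongr : (∫ θ in (0:ℝ)..(2*π),
      ((α * d1 u (zpt x t θ) + β * d2 u (zpt x t θ)) - (α * d1 u x + β * d2 u x)))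
      = ∫ θ in (0:ℝ)..(2*π), (∫ s in (0:ℝ)..t, D s θ) := by
    apply intervalIntegral.integral_congr
    intro θ _
    exact (b1 θ).symm
  have cD2 : ContinuousOn (Function.uncurry D) (Icc 0 t ×ˢ Icc 0 (2*π)) := by
    exact ((Real.continuous_cos.comp continuous_snd).continuousOn.mul
        ((continuousOn_const.mul (cont_rect (b := 2*π) hc11 htr)).add
         (continuousOn_const.mul (cont_rect (b := 2*π) hc21 htr)))).add
      ((Real.continuous_sin.comp continuous_snd).continuousOn.mul
        ((continuousOn_const.mul (cont_rect (b := 2*π) hc12 htr)).add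
         (continuousOn_const.mul (cont_rect (b := 2*π) hc22 htr))))
  have hswap : (∫ θ in (0:ℝ)..(2*π), (∫ s in (0:ℝ)..t, D s θ))
      = ∫ s in (0:ℝ)..t, ∫ θ in (0:ℝ)..(2*π), D s θ := (swap_helper ht.1 htp0 cD2).symm
  have hcong2 : (∫ s in (0:ℝ)..t, ∫ θ in (0:ℝ)..(2*π), D s θ)
      = ∫ s in (0:ℝ)..t, ∫ θ in (0:ℝ)..(2*π), KL s θ := by
    apply intervalIntegral.integral_congr
    intro s hsm
    rw [uIcc_of_le ht.1] at hsm
    exact b3 s hsm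
  rw [hsub, hcongr, hswap, hcong2]
  have hbnd : ∀ s ∈ Ι (0:ℝ) t, ‖∫ θ in (0:ℝ)..(2*π), KL s θ‖ ≤ 4*π*B := by
    intro s hsm
    rw [uIoc_of_le ht.1] at hsm
    have hs' : 0 ≤ s ∧ s ≤ t := ⟨hsm.1.le, hsm.2⟩
    have hin : ∀ θ ∈ Ι (0:ℝ) (2*π), ‖KL s θ‖ ≤ 2*B := by
      intro θ _
      have hzm := zpt_mem (x := x) (θ := θ) hs'.1 (hs'.2.trans ht.2) hσr
      have hS : |d1 (d1 u) (zpt x s θ) + d2 (d2 u) (zpt x s θ)| ≤ B := by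
        have hh := hB _ hzm
        rw [lapC_eq, abs_neg] at hh
        exact hh
      have : ‖KL s θ‖ = |kk α β θ| * |d1 (d1 u) (zpt x s θ) + d2 (d2 u) (zpt x s θ)| := by
        simp only [hKL, Real.norm_eq_abs, abs_mul]
      rw [this]
      exact mul_le_mul (hkk θ) hS (abs_nonneg _) (by norm_num)
    have h := intervalIntegral.norm_integral_le_of_norm_le_const hin
    calc ‖∫ θ in (0:ℝ)..(2*π), KL s θ‖ ≤ 2*B * |2*π - 0| := h
    _ = 4*π*B := by rw [sub_zero, abs_of_nonneg htp0]; ring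
  have h := intervalIntegral.norm_integral_le_of_norm_le_const hbnd
  rw [Real.norm_eq_abs] at h
  calc |∫ s in (0:ℝ)..t, ∫ θ in (0:ℝ)..(2*π), KL s θ| ≤ 4*π*B * |t - 0| := h
  _ = 4*π*B*t := by rw [sub_zero, abs_of_nonneg ht.1]

lemma kk_abs_le {α β : ℝ} (hαβ : α^2+β^2=1) (θ : ℝ) : |kk α β θ| ≤ 2 := by
  have hα1 : |α| ≤ 1 := by nlinarith [sq_abs α, abs_nonneg α, sq_nonneg β]
  have hβ1 : |β| ≤ 1 := by nlinarith [sq_abs β, abs_nonneg β, sq_nonneg α]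
  unfold kk
  calc |α * Real.cos θ + β * Real.sin θ| ≤ |α * Real.cos θ| + |β * Real.sin θ| := abs_add_le _ _
  _ ≤ |α| * 1 + |β| * 1 := by
      rw [abs_mul, abs_mul]
      gcongr
      · exact Real.abs_cos_le_one θ
      · exact Real.abs_sin_le_one θ
  _ ≤ 2 := by linarith

lemma dir_est (u : ℂ → ℝ) (x : ℂ) (r σ A B α β : ℝ) (hσ : 0 < σ) (hσr : σ < r)
    (hu : ContDiffOn ℝ (⊤:ℕ∞) u (Metric.ball x r))
    (hA : ∀ z ∈ Metric.ball x r, |u z| ≤ A)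
    (hB : ∀ z ∈ Metric.ball x r, |lapC u z| ≤ B)
    (hαβ : α^2+β^2=1) :
    |α * d1 u x + β * d2 u x| ≤ 4*A/σ + 4*B*σ := by
  have htp0 : (0:ℝ) ≤ 2*π := by positivity
  have hπ := Real.pi_pos
  have hr0 : 0 < r := hσ.trans hσr
  have hA0 : 0 ≤ A := le_trans (abs_nonneg _) (hA x (mem_ball_self hr0))
  have hB0 : 0 ≤ B := le_trans (abs_nonneg _) (hB x (mem_ball_self hr0))
  have hcu : ContinuousOn u (ball x r) := hu.continuousOn
  have h1 := smo_d1 hu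
  have h2 := smo_d2 hu
  have hc1 : ContinuousOn (d1 u) (ball x r) := h1.continuousOn
  have hc2 : ContinuousOn (d2 u) (ball x r) := h2.continuousOn
  set uex : ℝ := α * d1 u x + β * d2 u x with huex
  -- bound on C σ
  have hCσ : |∫ θ in (0:ℝ)..(2*π), kk α β θ * u (zpt x σ θ)| ≤ 4*π*A := by
    have hin : ∀ θ ∈ Ι (0:ℝ) (2*π), ‖kk α β θ * u (zpt x σ θ)‖ ≤ 2*A := by
      intro θ _
      rw [Real.norm_eq_abs, abs_mul]
      exact mul_le_mul (kk_abs_le hαβ θ) (hA _ (zpt_mem hσ.le le_rfl hσr))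
        (abs_nonneg _) (by norm_num)
    have h := intervalIntegral.norm_integral_le_of_norm_le_const hin
    rw [Real.norm_eq_abs] at h
    calc |∫ θ in (0:ℝ)..(2*π), kk α β θ * u (zpt x σ θ)| ≤ 2*A * |2*π - 0| := h
    _ = 4*π*A := by rw [sub_zero, abs_of_nonneg htp0]; ring
  -- integrand continuity for W
  have hF1cont : ContinuousOn
      (Function.uncurry (fun t θ => t * (α * d1 u (zpt x t θ) + β * d2 u (zpt x t θ))))
      (Icc 0 σ ×ˢ Icc 0 (2*π)) := by
    exact (continuous_fst.continuousOn).mul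
      ((continuousOn_const.mul (cont_rect (b := 2*π) hc1 hσr)).add
       (continuousOn_const.mul (cont_rect (b := 2*π) hc2 hσr)))
  have iW : IntervalIntegrable
      (fun t => ∫ θ in (0:ℝ)..(2*π), t * (α * d1 u (zpt x t θ) + β * d2 u (zpt x t θ)))
      volume 0 σ := integrable_helper hσ.le htp0 hF1cont
  have hlin : IntervalIntegrable (fun t => t * (2*π*uex)) volume 0 σ :=
    (continuous_id.mul continuous_const).intervalIntegrable _ _
  have hsplit : (∫ t in (0:ℝ)..σ,
        ((∫ θ in (0:ℝ)..(2*π), t * (α * d1 u (zpt x t θ) + β * d2 u (zpt x t θ)))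
          - t * (2*π*uex)))
      = σ * (∫ θ in (0:ℝ)..(2*π), kk α β θ * u (zpt x σ θ)) - (σ^2/2) * (2*π*uex) := by
    rw [intervalIntegral.integral_sub iW hlin,
      stepA u x r σ α β hσ hσr hu hαβ,
      intervalIntegral.integral_mul_const, integral_id]
    ring
  have hptb : ∀ t ∈ Ι (0:ℝ) σ,
      ‖(∫ θ in (0:ℝ)..(2*π), t * (α * d1 u (zpt x t θ) + β * d2 u (zpt x t θ)))
        - t * (2*π*uex)‖ ≤ 4*π*B*σ^2 := by
    intro t hsm
    rw [uIoc_of_le hσ.le] at hsm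
    have hI := stepB u x r σ α β B hσ hσr hu hαβ hB (⟨hsm.1.le, hsm.2⟩ : t ∈ Icc (0:ℝ) σ)
    have hmul : (∫ θ in (0:ℝ)..(2*π), t * (α * d1 u (zpt x t θ) + β * d2 u (zpt x t θ)))
        = t * ∫ θ in (0:ℝ)..(2*π), (α * d1 u (zpt x t θ) + β * d2 u (zpt x t θ)) :=
      intervalIntegral.integral_const_mul t _
    rw [hmul, Real.norm_eq_abs]
    have hfac : t * (∫ θ in (0:ℝ)..(2*π), (α * d1 u (zpt x t θ) + β * d2 u (zpt x t θ)))
        - t * (2*π*uex)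
        = t * ((∫ θ in (0:ℝ)..(2*π), (α * d1 u (zpt x t θ) + β * d2 u (zpt x t θ)))
            - 2*π*uex) := by ring
    rw [hfac, abs_mul, abs_of_nonneg hsm.1.le]
    calc t * |(∫ θ in (0:ℝ)..(2*π), (α * d1 u (zpt x t θ) + β * d2 u (zpt x t θ))) - 2*π*uex|
        ≤ σ * (4*π*B*t) := by
          apply mul_le_mul hsm.2 ?_ (abs_nonneg _) hσ.le
          rw [huex]
          exact hI
    _ ≤ 4*π*B*σ^2 := by
          have hb := mul_le_mul_of_nonneg_left hsm.2 (by positivity : (0:ℝ) ≤ 4*π*B*σ)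
          nlinarith [hb]
  have hIb := intervalIntegral.norm_integral_le_of_norm_le_const hptb
  rw [hsplit, Real.norm_eq_abs, sub_zero, abs_of_nonneg hσ.le] at hIb
  -- final arithmetic
  have final : π*σ^2*|uex| ≤ 4*π*A*σ + 4*π*B*σ^3 := by
    have habs : |(σ^2/2) * (2*π*uex)| = π*σ^2*|uex| := by
      rw [abs_mul, abs_of_nonneg (by positivity : (0:ℝ) ≤ σ^2/2), abs_mul,
        abs_of_nonneg (by positivity : (0:ℝ) ≤ 2*π)]
      ring
    have htri : |(σ^2/2) * (2*π*uex)|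
        ≤ |σ * (∫ θ in (0:ℝ)..(2*π), kk α β θ * u (zpt x σ θ))| + 4*π*B*σ^2 * σ := by
      have h := abs_sub_abs_le_abs_sub ((σ^2/2) * (2*π*uex))
        (σ * (∫ θ in (0:ℝ)..(2*π), kk α β θ * u (zpt x σ θ)))
      rw [abs_sub_comm] at h
      linarith [hIb, h]
    have hσC : |σ * (∫ θ in (0:ℝ)..(2*π), kk α β θ * u (zpt x σ θ))| ≤ σ * (4*π*A) := by
      rw [abs_mul, abs_of_nonneg hσ.le]
      exact mul_le_mul_of_nonneg_left hCσ hσ.le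
    rw [habs] at htri
    nlinarith [htri, hσC]
  have hpos : 0 < π * σ^2 := by positivity
  have hXb : |uex| ≤ (4*π*A*σ + 4*π*B*σ^3)/(π*σ^2) := by
    rw [le_div_iff₀ hpos, mul_comm]
    exact final
  have heq : (4*π*A*σ + 4*π*B*σ^3)/(π*σ^2) = 4*A/σ + 4*B*σ := by
    field_simp
  rwa [heq] at hXb

lemma key_grad (u : ℂ → ℝ) (x : ℂ) (r σ A B : ℝ) (hσ : 0 < σ) (hσr : σ < r)
    (hu : ContDiffOn ℝ (⊤:ℕ∞) u (Metric.ball x r))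
    (hA : ∀ z ∈ Metric.ball x r, |u z| ≤ A)
    (hB : ∀ z ∈ Metric.ball x r, |lapC u z| ≤ B) :
    ‖fderiv ℝ u x‖ ≤ 4*A/σ + 4*B*σ := by
  have hr0 : 0 < r := hσ.trans hσr
  have hA0 : 0 ≤ A := le_trans (abs_nonneg _) (hA x (mem_ball_self hr0))
  have hB0 : 0 ≤ B := le_trans (abs_nonneg _) (hB x (mem_ball_self hr0))
  have hbound : 0 ≤ 4*A/σ + 4*B*σ := by positivity
  apply ContinuousLinearMap.opNorm_le_bound _ hbound
  intro z
  rcases eq_or_ne z 0 with rfl | hz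
  · simp
  · have hnz : (0:ℝ) < ‖z‖ := norm_pos_iff.mpr hz
    have hn2 : ‖z‖^2 = z.re^2 + z.im^2 := by
      rw [Complex.sq_norm, Complex.normSq_apply]; ring
    have hαβ : (z.re/‖z‖)^2 + (z.im/‖z‖)^2 = 1 := by
      rw [div_pow, div_pow, ← add_div, ← hn2, div_self (by positivity)]
    have hd := dir_est u x r σ A B (z.re/‖z‖) (z.im/‖z‖) hσ hσr hu hA hB hαβ
    have happ : fderiv ℝ u x z = z.re * d1 u x + z.im * d2 u x := clm_decomp _ z
    rw [Real.norm_eq_abs, happ]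
    have hre : z.re = (z.re/‖z‖) * ‖z‖ := (div_mul_cancel₀ _ hnz.ne').symm
    have him : z.im = (z.im/‖z‖) * ‖z‖ := (div_mul_cancel₀ _ hnz.ne').symm
    rw [hre, him]
    have hfac : (z.re/‖z‖) * ‖z‖ * d1 u x + (z.im/‖z‖) * ‖z‖ * d2 u x
        = ((z.re/‖z‖) * d1 u x + (z.im/‖z‖) * d2 u x) * ‖z‖ := by ring
    rw [hfac, abs_mul, abs_of_nonneg hnz.le]
    apply mul_le_mul_of_nonneg_right ?_ hnz.le
    simpa using hd

lemma fderiv_dir_sub {v w : ℂ → ℝ} {x : ℂ} {r : ℝ} (e e' : ℂ)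
    (hv : ContDiffOn ℝ (⊤:ℕ∞) v (Metric.ball x r))
    (hw : ContDiffOn ℝ (⊤:ℕ∞) w (Metric.ball x r)) {z : ℂ} (hz : z ∈ Metric.ball x r) :
    fderiv ℝ (fun y => fderiv ℝ (fun y' => v y' - w y') y e) z e'
      = fderiv ℝ (fun y => fderiv ℝ v y e) z e' - fderiv ℝ (fun y => fderiv ℝ w y e) z e' := by
  have hdv : ∀ y ∈ ball x r, DifferentiableAt ℝ v y := fun y hy =>
    ((hv y hy).contDiffAt (isOpen_ball.mem_nhds hy)).differentiableAt (by simp)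
  have hdw : ∀ y ∈ ball x r, DifferentiableAt ℝ w y := fun y hy =>
    ((hw y hy).contDiffAt (isOpen_ball.mem_nhds hy)).differentiableAt (by simp)
  have h1 : (fun y => fderiv ℝ (fun y' => v y' - w y') y e)
      =ᶠ[nhds z] (fun y => fderiv ℝ v y e - fderiv ℝ w y e) := by
    filter_upwards [isOpen_ball.mem_nhds hz] with y hy
    rw [fderiv_fun_sub (hdv y hy) (hdw y hy)]
    simp
  rw [Filter.EventuallyEq.fderiv_eq h1]
  have hdva : DifferentiableAt ℝ (fun y => fderiv ℝ v y e) z :=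
    (((smo_dv e hv) z hz).contDiffAt (isOpen_ball.mem_nhds hz)).differentiableAt (by simp)
  have hdwa : DifferentiableAt ℝ (fun y => fderiv ℝ w y e) z :=
    (((smo_dv e hw) z hz).contDiffAt (isOpen_ball.mem_nhds hz)).differentiableAt (by simp)
  rw [fderiv_fun_sub hdva hdwa]
  simp

lemma lapC_sub {v w : ℂ → ℝ} {x : ℂ} {r : ℝ}
    (hv : ContDiffOn ℝ (⊤:ℕ∞) v (Metric.ball x r))
    (hw : ContDiffOn ℝ (⊤:ℕ∞) w (Metric.ball x r)) {z : ℂ} (hz : z ∈ Metric.ball x r) :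
    lapC (fun y => v y - w y) z = lapC v z - lapC w z := by
  simp only [lapC]
  rw [fderiv_dir_sub 1 1 hv hw hz, fderiv_dir_sub Complex.I Complex.I hv hw hz]
  ring

/-- Interior gradient estimate: if v satisfies Δ_h v = K + e^{−2v} on a ball
(in a conformal chart h = e^{2w}|dz|², with bounded geometry |w| ≤ M', ‖dw‖ ≤ M'
on the ball), with |K| ≤ M and |v| ≤ M on the ball, then ‖dv(x)‖_h ≤ C at the
center, for a constant C depending only on M, r and the geometry bounds M'. -/
theorem stmt16 (M r M' : ℝ) (hM : 0 < M) (hr : 0 < r) (hM' : 0 ≤ M') :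
    ∃ C > 0, ∀ (w v : ℂ → ℝ) (x : ℂ),
      ContDiffOn ℝ (⊤ : ℕ∞) w (Metric.ball x r) →
      ContDiffOn ℝ (⊤ : ℕ∞) v (Metric.ball x r) →
      (∀ z ∈ Metric.ball x r, |w z| ≤ M' ∧ ‖fderiv ℝ w z‖ ≤ M') →
      (∀ z ∈ Metric.ball x r,
        Real.exp (-2 * w z) * lapC v z =
          Real.exp (-2 * w z) * lapC w z + Real.exp (-2 * v z)) →
      (∀ z ∈ Metric.ball x r,
        |Real.exp (-2 * w z) * lapC w z| ≤ M ∧ |v z| ≤ M) →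
      Real.exp (-(w x)) * ‖fderiv ℝ v x‖ ≤ C := by
  have hσ : 0 < r/2 := by linarith
  have hσr : r/2 < r := by linarith
  refine ⟨Real.exp M' * ((4*(M+M')/(r/2) + 4*Real.exp (2*(M+M'))*(r/2)) + M') + 1,
    by positivity, ?_⟩
  intro w v x hw hv hgeo hpde hbd
  have hx : x ∈ Metric.ball x r := mem_ball_self hr
  have hv' : ContDiffOn ℝ (⊤:ℕ∞) v (Metric.ball x r) := hv.of_le (by simp)
  have hw' : ContDiffOn ℝ (⊤:ℕ∞) w (Metric.ball x r) := hw.of_le (by simp)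
  have hu : ContDiffOn ℝ (⊤:ℕ∞) (fun z => v z - w z) (Metric.ball x r) := hv'.sub hw'
  have hA : ∀ z ∈ Metric.ball x r, |(fun z => v z - w z) z| ≤ M + M' := by
    intro z hz
    have h1 := (hbd z hz).2
    have h2 := (hgeo z hz).1
    simp only
    calc |v z - w z| ≤ |v z| + |w z| := abs_sub _ _
    _ ≤ M + M' := add_le_add h1 h2
  have hlap : ∀ z ∈ Metric.ball x r,
      |lapC (fun y => v y - w y) z| ≤ Real.exp (2*(M+M')) := by
    intro z hz
    rw [lapC_sub hv' hw' hz]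
    have hp := hpde z hz
    have hveq : lapC v z - lapC w z = Real.exp (2 * w z) * Real.exp (-2 * v z) := by
      have h2 : Real.exp (-2 * w z) * (lapC v z - lapC w z) = Real.exp (-2 * v z) := by
        ring_nf
        ring_nf at hp
        linarith
      have h3 := congrArg (fun y => Real.exp (2 * w z) * y) h2
      rwa [← mul_assoc, ← Real.exp_add, (by ring : 2 * w z + -2 * w z = 0),
        Real.exp_zero, one_mul] at h3
    rw [hveq, ← Real.exp_add, Real.abs_exp]
    apply Real.exp_le_exp.mpr
    have hwz := abs_le.1 (hgeo z hz).1
    have hvz := abs_le.1 (hbd z hz).2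
    linarith [hwz.1, hwz.2, hvz.1, hvz.2]
  have hgrad := key_grad (fun z => v z - w z) x r (r/2) (M+M') (Real.exp (2*(M+M')))
    hσ hσr hu hA hlap
  have hdu : DifferentiableAt ℝ (fun z => v z - w z) x :=
    ((hu x hx).contDiffAt (isOpen_ball.mem_nhds hx)).differentiableAt (by simp)
  have hdw : DifferentiableAt ℝ w x :=
    ((hw' x hx).contDiffAt (isOpen_ball.mem_nhds hx)).differentiableAt (by simp)
  have hfd : fderiv ℝ v x = fderiv ℝ (fun z => v z - w z) x + fderiv ℝ w x := by
    have hve : v = fun z => (v z - w z) + w z := by funext z; ring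
    conv_lhs => rw [hve]
    rw [fderiv_fun_add hdu hdw]
  have hnv : ‖fderiv ℝ v x‖ ≤ (4*(M+M')/(r/2) + 4*Real.exp (2*(M+M'))*(r/2)) + M' := by
    rw [hfd]
    exact (norm_add_le _ _).trans (add_le_add hgrad (hgeo x hx).2)
  have hexp : Real.exp (-(w x)) ≤ Real.exp M' := by
    apply Real.exp_le_exp.mpr
    have := abs_le.1 (hgeo x hx).1
    linarith [this.1]
  have hfin : Real.exp (-(w x)) * ‖fderiv ℝ v x‖
      ≤ Real.exp M' * ((4*(M+M')/(r/2) + 4*Real.exp (2*(M+M'))*(r/2)) + M') := by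
    apply mul_le_mul hexp hnv (norm_nonneg _) (Real.exp_pos _).le
  linarith
end
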